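/- arXiv:1803.07361 — 3 statements merged into one kernel-verified Lean document; each statement's English description precedes it below -/
import Mathlib

section
/- Let E and V be real vector spaces, let n ≥ 2 be even with m = n/2, and let T : Eⁿ → V be a symmetric n-linear map. Let f, g ∈ E and suppose that for every real number λ ≥ 0 both T((f+λg)ⁿ) = T((f−λg)ⁿ) and T((f+λg)ⁿ) + T((f−λg)ⁿ) = 2 · ∑_{k=0}^{m} C(m,k) · λ^{2k} · T(f^{n-2k} g^{2k}) hold (where T((f±λg)ⁿ) denotes T evaluated with all n arguments equal to f±λg). Then T(f^{n-k} g^{k}) = 0 for every k with 1 ≤ k ≤ n−1. -/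
/-!
Write `a k = T(f^(n-k) g^k)`. By symmetry, `T((f + λg)ⁿ) = ∑ C(n,k) λ^k a k`, and by the first
hypothesis the second one says that this polynomial in `λ` agrees on `[0, ∞)` with
`∑ C(m,k) λ^(2k) a (2k)`. Comparing coefficients, `a k = 0` for odd `k`, and
`C(2m,2k) a (2k) = C(m,k) a (2k)`, where `C(2m,2k) > C(m,k)` for `0 < k < m` by Vandermonde.
-/

open Finset

open Polynomial in
theorem eq_of_forall_sum_pow_smul_eq {K V : Type*} [Field K] [AddCommGroup V] [Module K V]
    {s : Set K} (hs : s.Infinite) {N : ℕ} {v w : ℕ → V}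
    (h : ∀ x ∈ s, ∑ j ∈ range N, x ^ j • v j = ∑ j ∈ range N, x ^ j • w j)
    {k : ℕ} (hk : k < N) : v k = w k := by
  rw [← sub_eq_zero, ← Module.forall_dual_apply_eq_zero_iff K]
  intro φ
  set p : K[X] := ∑ j ∈ range N, C (φ (v j - w j)) * X ^ j
  have hp : p = 0 := by
    refine p.eq_zero_of_infinite_isRoot (hs.mono fun x hx => ?_)
    have hφ := congrArg φ (sub_eq_zero.mpr (h x hx))
    simp only [← sum_sub_distrib, ← smul_sub, map_sum, map_smul, map_zero, smul_eq_mul] at hφ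
    simpa [p, eval_finsetSum, mul_comm] using hφ
  simpa only [p, finsetSum_coeff, coeff_C_mul, coeff_X_pow, mul_ite, mul_one, mul_zero,
    sum_ite_eq, mem_range, hk, if_true, coeff_zero] using congrArg (coeff · k) hp

theorem sum_range_succ_eq_sum_range_two_mul_succ_ite_even {M : Type*} [AddCommMonoid M]
    (u : ℕ → M) (m : ℕ) :
    ∑ k ∈ range (m + 1), u k =
      ∑ j ∈ range (2 * m + 1), if Even j then u (j / 2) else 0 := by
  induction m with
  | zero => simp
  | succ m ih =>
    have hodd : ¬Even (2 * m + 1) := Nat.not_even_two_mul_add_one m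
    have heven : Even (2 * m + 1 + 1) := ⟨m + 1, by ring⟩
    rw [sum_range_succ, ih, show 2 * (m + 1) + 1 = 2 * m + 1 + 1 + 1 by ring,
      sum_range_succ _ (2 * m + 1 + 1), sum_range_succ _ (2 * m + 1), if_neg hodd, if_pos heven,
      add_zero, show (2 * m + 1 + 1) / 2 = m + 1 by omega]

theorem Nat.choose_lt_choose_two_mul {m j : ℕ} (hj : 1 ≤ j) (hjm : j < m) :
    m.choose j < (2 * m).choose (2 * j) := by
  set F : ℕ × ℕ → ℕ := fun p => m.choose p.1 * m.choose p.2
  have hne : (j, j) ≠ (j - 1, j + 1) := by simp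
  have hsub : {(j, j), (j - 1, j + 1)} ⊆ antidiagonal (2 * j) := by
    intro x hx
    simp only [mem_insert, mem_singleton] at hx
    rcases hx with rfl | rfl <;> simp only [HasAntidiagonal.mem_antidiagonal] <;> omega
  have hpos : 0 < m.choose (j - 1) * m.choose (j + 1) :=
    Nat.mul_pos (Nat.choose_pos (by omega)) (Nat.choose_pos hjm)
  calc m.choose j < m.choose j * m.choose j + m.choose (j - 1) * m.choose (j + 1) := by
        have := Nat.choose_pos hjm.le
        nlinarith
    _ = ∑ p ∈ {(j, j), (j - 1, j + 1)}, F p := (sum_pair (f := F) hne).symm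
    _ ≤ ∑ p ∈ antidiagonal (2 * j), F p := sum_le_sum_of_subset hsub
    _ = (2 * m).choose (2 * j) := by rw [two_mul m, Nat.add_choose_eq]

theorem apply_piecewise_eq_of_card_eq {ι α β : Type*} [DecidableEq ι] (F : (ι → α) → β)
    (hF : ∀ (σ : Equiv.Perm ι) (x : ι → α), F (x ∘ σ) = F x) (a b : α) {s t : Finset ι}
    (h : #s = #t) :
    F (s.piecewise (fun _ => a) (fun _ => b)) = F (t.piecewise (fun _ => a) (fun _ => b)) := by
  obtain ⟨σ, hσ⟩ := Equiv.Perm.exists_map_finset_eq s t h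
  rw [← hF σ (t.piecewise _ _)]
  congr 1
  ext i
  simp [Finset.piecewise, ← hσ]

theorem apply_piecewise_eq_apply_ite_lt_card {n : ℕ} {α β : Type*} (F : (Fin n → α) → β)
    (hF : ∀ (σ : Equiv.Perm (Fin n)) (x : Fin n → α), F (x ∘ σ) = F x) (a b : α)
    (s : Finset (Fin n)) :
    F (s.piecewise (fun _ => a) (fun _ => b)) = F (fun i => if (i : ℕ) < #s then a else b) := by
  have hcard : #s = #{i : Fin n | (i : ℕ) < #s} := by
    rw [Fin.card_filter_val_lt, min_eq_right (card_le_univ s |>.trans_eq (Fintype.card_fin n))]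
  rw [apply_piecewise_eq_of_card_eq F hF a b hcard]
  congr 1
  ext i
  simp [Finset.piecewise]

theorem MultilinearMap.apply_const_add_smul_eq_sum_choose {R M N : Type*} [CommSemiring R]
    [AddCommMonoid M] [Module R M] [AddCommMonoid N] [Module R N] {n : ℕ}
    (T : MultilinearMap R (fun _ : Fin n => M) N)
    (hT : ∀ (σ : Equiv.Perm (Fin n)) (x : Fin n → M), T (x ∘ σ) = T x) (f g : M) (c : R) :
    T (fun _ => f + c • g) =
      ∑ k ∈ Finset.range (n + 1),
        (n.choose k * c ^ k) • T (fun i => if (i : ℕ) < n - k then f else g) := by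
  classical
  have hterm (s : Finset (Fin n)) : T (s.piecewise (fun _ => c • g) (fun _ => f)) =
      c ^ #s • T (fun i => if (i : ℕ) < n - #s then f else g) := by
    have hsmul : s.piecewise (fun _ => c • g) (fun _ => f) =
        s.piecewise (fun i => c • s.piecewise (fun _ => g) (fun _ => f) i)
          (s.piecewise (fun _ => g) (fun _ => f)) := by
      ext i
      by_cases hi : i ∈ s <;> simp [hi]
    rw [hsmul, T.map_piecewise_smul, prod_const, ← piecewise_compl,
      apply_piecewise_eq_apply_ite_lt_card T hT, card_compl, Fintype.card_fin]
  calc T (fun _ => f + c • g) = T ((fun _ => c • g) + fun _ => f) := by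
        simp only [add_comm]; rfl
    _ = ∑ s : Finset (Fin n), c ^ #s • T (fun i => if (i : ℕ) < n - #s then f else g) := by
      simp only [T.map_add_univ, hterm]
    _ = _ := by
      rw [← powerset_univ,
        sum_powerset_apply_card
          (fun k => c ^ k • T (fun i => if (i : ℕ) < n - k then f else g)),
        card_univ, Fintype.card_fin]
      simp only [← Nat.cast_smul_eq_nsmul R, smul_smul]

theorem stmt_5_general (E V : Type*) [AddCommGroup E] [Module ℝ E]
    [AddCommGroup V] [Module ℝ V] (n m : ℕ) (hnm : n = 2 * m)
    (T : MultilinearMap ℝ (fun _ : Fin n => E) V)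
    (hsym : ∀ (σ : Equiv.Perm (Fin n)) (x : Fin n → E), T (x ∘ σ) = T x)
    (f g : E)
    (h1 : ∀ lam : ℝ, 0 ≤ lam →
      T (fun _ => f + lam • g) = T (fun _ => f - lam • g))
    (h2 : ∀ lam : ℝ, 0 ≤ lam →
      T (fun _ => f + lam • g) + T (fun _ => f - lam • g) =
        (2 : ℝ) • ∑ k ∈ Finset.range (m + 1),
          ((m.choose k : ℝ) * lam ^ (2 * k)) •
            T (fun i => if (i : ℕ) < n - 2 * k then f else g)) :
    ∀ k, 1 ≤ k → k ≤ n - 1 →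
      T (fun i => if (i : ℕ) < n - k then f else g) = 0 := by
  subst hnm
  set a : ℕ → V := fun j => T (fun i => if (i : ℕ) < 2 * m - j then f else g)
  set c : ℕ → ℝ := fun j => if Even j then (m.choose (j / 2) : ℝ) else 0
  have hexpand (lam : ℝ) : T (fun _ => f + lam • g) =
      ∑ j ∈ range (2 * m + 1), lam ^ j • ((2 * m).choose j : ℝ) • a j := by
    rw [T.apply_const_add_smul_eq_sum_choose hsym]
    exact sum_congr rfl fun j _ => by rw [smul_smul, mul_comm]
  have heven (lam : ℝ) :
      ∑ k ∈ range (m + 1), ((m.choose k : ℝ) * lam ^ (2 * k)) • a (2 * k) =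
        ∑ j ∈ range (2 * m + 1), lam ^ j • c j • a j := by
    rw [sum_range_succ_eq_sum_range_two_mul_succ_ite_even]
    refine sum_congr rfl fun j _ => ?_
    by_cases hj : Even j
    · simp [c, hj, Nat.two_mul_div_two_of_even hj, smul_smul, mul_comm]
    · simp [c, hj]
  have hcoeff (j : ℕ) (hj : j < 2 * m + 1) : ((2 * m).choose j : ℝ) • a j = c j • a j := by
    refine eq_of_forall_sum_pow_smul_eq (v := fun j => ((2 * m).choose j : ℝ) • a j)
      (w := fun j => c j • a j) (Set.Ici_infinite (0 : ℝ)) (fun lam hlam => ?_) hj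
    have h := h2 lam hlam
    rw [← h1 lam hlam, ← two_smul ℝ, hexpand, heven] at h
    exact smul_right_injective V two_ne_zero h
  intro k hk1 hk2
  by_contra hak
  have hne : ((2 * m).choose k : ℝ) ≠ c k := by
    obtain ⟨j, rfl | rfl⟩ := Nat.even_or_odd' k
    · have := Nat.choose_lt_choose_two_mul (m := m) (j := j) (by omega) (by omega)
      simp only [c, even_two_mul, if_true, Nat.mul_div_cancel_left j two_pos]
      exact_mod_cast this.ne'
    · simp only [c, Nat.not_even_two_mul_add_one, if_false]
      exact_mod_cast (Nat.choose_pos (by omega)).ne'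
  exact hne (smul_left_injective ℝ hak (hcoeff k (by omega)))

theorem stmt_5 (E V : Type*) [AddCommGroup E] [Module ℝ E]
    [AddCommGroup V] [Module ℝ V] (n m : ℕ) (hn : 2 ≤ n) (hnm : n = 2 * m)
    (T : MultilinearMap ℝ (fun _ : Fin n => E) V)
    (hsym : ∀ (σ : Equiv.Perm (Fin n)) (x : Fin n → E), T (x ∘ σ) = T x)
    (f g : E)
    (h1 : ∀ lam : ℝ, 0 ≤ lam →
      T (fun _ => f + lam • g) = T (fun _ => f - lam • g))
    (h2 : ∀ lam : ℝ, 0 ≤ lam →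
      T (fun _ => f + lam • g) + T (fun _ => f - lam • g) =
        (2 : ℝ) • ∑ k ∈ Finset.range (m + 1),
          ((m.choose k : ℝ) * lam ^ (2 * k)) •
            T (fun i => if (i : ℕ) < n - 2 * k then f else g)) :
    ∀ k, 1 ≤ k → k ≤ n - 1 →
      T (fun i => if (i : ℕ) < n - k then f else g) = 0 :=
  stmt_5_general E V n m hnm T hsym f g h1 h2
end

section
/- Let E and V be real vector spaces, let n ≥ 3 be odd, and let T : Eⁿ → V be a symmetric n-linear map. Let f, g ∈ E and suppose that T((f+λg)ⁿ) = T((f−λg)^{n-1}(f+λg)) for every real number λ ≥ 0, where T((f+λg)ⁿ) denotes T with all n arguments equal to f+λg, and T((f−λg)^{n-1}(f+λg)) denotes T with n−1 arguments equal to f−λg and one argument equal to f+λg. Then T(f^{n-k} g^{k}) = 0 for every k with 1 ≤ k ≤ n−1. -/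
theorem stmt_6 (E V : Type*) [AddCommGroup E] [Module ℝ E]
    [AddCommGroup V] [Module ℝ V] (n : ℕ) (hn : 3 ≤ n) (hodd : Odd n)
    (T : MultilinearMap ℝ (fun _ : Fin n => E) V)
    (hsym : ∀ (σ : Equiv.Perm (Fin n)) (x : Fin n → E), T (x ∘ σ) = T x)
    (f g : E)
    (h : ∀ lam : ℝ, 0 ≤ lam →
      T (fun _ => f + lam • g) =
        T (fun i => if (i : ℕ) < n - 1 then f - lam • g else f + lam • g)) :
    ∀ k, 1 ≤ k → k ≤ n - 1 →
      T (fun i => if (i : ℕ) < n - k then f else g) = 0 := by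
  classical
  intro k hk1 hk2
  have hkn : k ≤ n := le_trans hk2 (Nat.sub_le n 1)
  set c : ℕ → V := fun m => T (fun i => if (i : ℕ) < n - m then f else g) with hc
  -- cardinality of canonical initial segments
  have hcardfilter : ∀ m : ℕ, m ≤ n →
      (Finset.filter (fun i : Fin n => (i : ℕ) < m) Finset.univ).card = m := by
    intro m hm
    have := Finset.card_bij' (s := Finset.filter (fun i : Fin n => (i : ℕ) < m) Finset.univ)
      (t := Finset.range m) (fun i _ => (i : ℕ))
      (fun j hj => (⟨j, lt_of_lt_of_le (Finset.mem_range.mp hj) hm⟩ : Fin n))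
      (fun i hi => Finset.mem_range.mpr (Finset.mem_filter.mp hi).2)
      (fun j hj => Finset.mem_filter.mpr ⟨Finset.mem_univ _, Finset.mem_range.mp hj⟩)
      (fun i _ => rfl) (fun j _ => rfl)
    simpa using this
  -- symmetry: T on a subset-indicator family only depends on the cardinality
  have hsymcard : ∀ s : Finset (Fin n),
      T (fun i => if i ∈ s then f else g) = c (sᶜ.card) := by
    intro s
    have hsc : s.card ≤ n := by
      simpa using Finset.card_le_univ s
    have hns : n - sᶜ.card = s.card := by
      rw [Finset.card_compl, Fintype.card_fin]; omega
    have hcs : c sᶜ.card = T (fun i => if (i : ℕ) < s.card then f else g) := by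
      rw [hc]; simp only [hns]
    rw [hcs]
    set t := Finset.filter (fun i : Fin n => (i : ℕ) < s.card) Finset.univ with ht
    have htc : s.card = t.card := (hcardfilter s.card hsc).symm
    have e : {x : Fin n // x ∈ s} ≃ {x : Fin n // x ∈ t} := Finset.equivOfCardEq htc
    have key : ∀ i : Fin n, (e.extendSubtype i ∈ t) ↔ i ∈ s := by
      intro i
      constructor
      · intro hit
        by_contra his
        exact Equiv.extendSubtype_not_mem e i his hit
      · intro his
        exact Equiv.extendSubtype_mem e i his
    have hcomp : ((fun i : Fin n => if (i : ℕ) < s.card then f else g) ∘ e.extendSubtype)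
        = fun i => if i ∈ s then f else g := by
      funext i
      have hmt : ∀ j : Fin n, (j ∈ t ↔ (j : ℕ) < s.card) := by
        intro j; rw [ht, Finset.mem_filter]; simp
      have : ((e.extendSubtype i : Fin n) : ℕ) < s.card ↔ i ∈ s :=
        (hmt _).symm.trans (key i)
      simp only [Function.comp]
      by_cases his : i ∈ s
      · rw [if_pos (this.mpr his), if_pos his]
      · rw [if_neg (fun hlt => his (this.mp hlt)), if_neg his]
    rw [← hcomp, hsym]
  -- multilinear expansion
  have hexp : ∀ d : Fin n → ℝ,
      T (fun i => f + d i • g) =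
        ∑ s : Finset (Fin n), (∏ i ∈ sᶜ, d i) • c (sᶜ.card) := by
    intro d
    have h1 : T (fun i => f + d i • g)
        = T ((fun _ : Fin n => f) + fun i => d i • g) := rfl
    rw [h1, T.map_add_univ]
    refine Finset.sum_congr rfl fun s _ => ?_
    have h2 : Finset.piecewise s (fun _ : Fin n => f) (fun i => d i • g)
        = Finset.piecewise sᶜ (fun i => d i • (if i ∈ s then f else g))
            (fun i => if i ∈ s then f else g) := by
      funext i
      by_cases hi : i ∈ s <;> simp [Finset.piecewise, hi]
    rw [h2, T.map_piecewise_smul, hsymcard s]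
  -- sign pattern for the right-hand side
  set sign : Fin n → ℝ := fun i => if (i : ℕ) < n - 1 then (-1 : ℝ) else 1 with hsigndef
  set last : Fin n := ⟨n - 1, by omega⟩ with hlastdef
  have hsignval : ∀ i : Fin n, sign i = if i = last then 1 else -1 := by
    intro i
    by_cases hi : i = last
    · subst hi
      have : ¬ ((last : ℕ) < n - 1) := by rw [hlastdef]; simp
      rw [hsigndef]; simp [this]
    · have hne : (i : ℕ) ≠ n - 1 := by
        intro hval
        exact hi (Fin.ext (by rw [hval, hlastdef]))
      have hlt : (i : ℕ) < n - 1 := by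
        have := i.isLt; omega
      rw [hsigndef]; simp only [hlt, if_true, if_neg hi]
  -- key polynomial identity
  have hmain : ∀ lam : ℝ, 0 ≤ lam →
      ∑ s : Finset (Fin n), (lam ^ sᶜ.card) • c sᶜ.card
        = ∑ s : Finset (Fin n), ((∏ i ∈ sᶜ, sign i) * lam ^ sᶜ.card) • c sᶜ.card := by
    intro lam hlam
    have h1 := h lam hlam
    have h2 : (fun i : Fin n => if (i : ℕ) < n - 1 then f - lam • g else f + lam • g)
        = fun i => f + (sign i * lam) • g := by
      funext i
      by_cases hi : (i : ℕ) < n - 1 <;>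
        simp [hsigndef, hi, sub_eq_add_neg, neg_smul]
    rw [h2] at h1
    have hL : T (fun _ : Fin n => f + lam • g)
        = ∑ s : Finset (Fin n), (∏ i ∈ sᶜ, lam) • c sᶜ.card := hexp (fun _ => lam)
    have hR := hexp (fun i => sign i * lam)
    rw [hL, hR] at h1
    calc ∑ s : Finset (Fin n), (lam ^ sᶜ.card) • c sᶜ.card
        = ∑ s : Finset (Fin n), (∏ i ∈ sᶜ, lam) • c sᶜ.card := by
          simp [Finset.prod_const]
      _ = ∑ s : Finset (Fin n), (∏ i ∈ sᶜ, (sign i * lam)) • c sᶜ.card := h1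
      _ = ∑ s : Finset (Fin n), ((∏ i ∈ sᶜ, sign i) * lam ^ sᶜ.card) • c sᶜ.card := by
          simp [Finset.prod_mul_distrib, Finset.prod_const]
  -- counting lemmas
  have hprod : ∀ u ∈ Finset.powersetCard k (Finset.univ : Finset (Fin n)),
      ∏ i ∈ u, sign i = if last ∈ u then (-1 : ℝ) ^ (k - 1) else (-1) ^ k := by
    intro u hu
    have hucard : u.card = k := (Finset.mem_powersetCard.mp hu).2
    by_cases hl : last ∈ u
    · rw [if_pos hl, ← Finset.mul_prod_erase u sign hl, hsignval last, if_pos rfl, one_mul]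
      have hall : ∀ i ∈ u.erase last, sign i = -1 := by
        intro i hi
        rw [hsignval i, if_neg (Finset.ne_of_mem_erase hi)]
      rw [Finset.prod_congr rfl hall, Finset.prod_const, Finset.card_erase_of_mem hl, hucard]
    · rw [if_neg hl]
      have hall : ∀ i ∈ u, sign i = -1 := by
        intro i hi
        rw [hsignval i, if_neg (by rintro rfl; exact hl hi)]
      rw [Finset.prod_congr rfl hall, Finset.prod_const, hucard]
  have hM : ((Finset.powersetCard k (Finset.univ : Finset (Fin n))).filter
      (fun u => last ∈ u)).card = (n - 1).choose (k - 1) := by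
    have h1 : ((Finset.powersetCard k (Finset.univ : Finset (Fin n))).filter
        (fun u => last ∈ u)).card
        = (Finset.powersetCard (k - 1) (Finset.univ.erase last)).card := by
      refine Finset.card_bij' (fun u _ => u.erase last) (fun v _ => insert last v)
        ?_ ?_ ?_ ?_
      · intro u hu
        obtain ⟨hu1, hl⟩ := Finset.mem_filter.mp hu
        obtain ⟨hsub, hcard⟩ := Finset.mem_powersetCard.mp hu1
        refine Finset.mem_powersetCard.mpr ⟨Finset.erase_subset_erase last hsub, ?_⟩
        rw [Finset.card_erase_of_mem hl, hcard]
      · intro v hv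
        obtain ⟨hsub, hcard⟩ := Finset.mem_powersetCard.mp hv
        have hlv : last ∉ v := fun hx => (Finset.mem_erase.mp (hsub hx)).1 rfl
        refine Finset.mem_filter.mpr ⟨Finset.mem_powersetCard.mpr
          ⟨Finset.subset_univ _, ?_⟩, Finset.mem_insert_self _ _⟩
        rw [Finset.card_insert_of_notMem hlv, hcard]; omega
      · intro u hu
        exact Finset.insert_erase (Finset.mem_filter.mp hu).2
      · intro v hv
        have hlv : last ∉ v := fun hx =>
          (Finset.mem_erase.mp ((Finset.mem_powersetCard.mp hv).1 hx)).1 rfl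
        exact Finset.erase_insert hlv
    rw [h1, Finset.card_powersetCard, Finset.card_erase_of_mem (Finset.mem_univ _),
      Finset.card_univ, Fintype.card_fin]
  have hpascal : n.choose k = (n - 1).choose (k - 1) + (n - 1).choose k := by
    obtain ⟨n', rfl⟩ : ∃ n', n = n' + 1 := ⟨n - 1, by omega⟩
    obtain ⟨k', rfl⟩ : ∃ k', k = k' + 1 := ⟨k - 1, by omega⟩
    simp [Nat.choose_succ_succ]
  have hMnot : ((Finset.powersetCard k (Finset.univ : Finset (Fin n))).filter
      (fun u => ¬ last ∈ u)).card = (n - 1).choose k := by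
    have htot := Finset.card_filter_add_card_filter_not
      (s := Finset.powersetCard k (Finset.univ : Finset (Fin n))) (p := fun u => last ∈ u)
    rw [Finset.card_powersetCard, Finset.card_univ, Fintype.card_fin, hM] at htot
    omega
  -- dual argument
  have hphi : ∀ φ : Module.Dual ℝ V, φ (c k) = 0 := by
    intro φ
    set p : Polynomial ℝ :=
      ∑ s : Finset (Fin n),
        Polynomial.C ((1 - ∏ i ∈ sᶜ, sign i) * φ (c sᶜ.card)) * Polynomial.X ^ sᶜ.card with hp
    have hroot : ∀ lam : ℝ, 0 ≤ lam → p.IsRoot lam := by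
      intro lam hlam
      have h1 := congrArg φ (hmain lam hlam)
      simp only [map_sum, map_smul, smul_eq_mul] at h1
      have heval : p.eval lam =
          (∑ s : Finset (Fin n), lam ^ sᶜ.card * φ (c sᶜ.card))
          - ∑ s : Finset (Fin n), (∏ i ∈ sᶜ, sign i) * lam ^ sᶜ.card * φ (c sᶜ.card) := by
        rw [hp, Polynomial.eval_finset_sum, ← Finset.sum_sub_distrib]
        refine Finset.sum_congr rfl fun s _ => ?_
        simp only [Polynomial.eval_mul, Polynomial.eval_C, Polynomial.eval_pow,
          Polynomial.eval_X]
        ring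
      show p.eval lam = 0
      rw [heval, h1, sub_self]
    have hp0 : p = 0 := by
      apply Polynomial.eq_zero_of_infinite_isRoot
      exact (Set.Ici_infinite (0 : ℝ)).mono (fun x hx => hroot x hx)
    have hcoeff : p.coeff k = 0 := by rw [hp0]; simp
    rw [hp, Polynomial.finset_sum_coeff] at hcoeff
    have hterm : ∀ s : Finset (Fin n),
        (Polynomial.C ((1 - ∏ i ∈ sᶜ, sign i) * φ (c sᶜ.card)) * Polynomial.X ^ sᶜ.card).coeff k
          = (if k = sᶜ.card then (1 - ∏ i ∈ sᶜ, sign i) else 0) * φ (c k) := by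
      intro s
      rw [Polynomial.coeff_C_mul, Polynomial.coeff_X_pow]
      by_cases hs : k = sᶜ.card
      · rw [if_pos hs, if_pos hs, ← hs]; ring
      · rw [if_neg hs, if_neg hs]; ring
    rw [Finset.sum_congr rfl (fun s _ => hterm s), ← Finset.sum_mul] at hcoeff
    have hNcalc : (∑ s : Finset (Fin n), if k = sᶜ.card then (1 - ∏ i ∈ sᶜ, sign i) else 0)
        = ∑ u : Finset (Fin n), if k = u.card then (1 - ∏ i ∈ u, sign i) else 0 := by
      apply Fintype.sum_equiv
        (⟨fun u : Finset (Fin n) => uᶜ, fun u => uᶜ, compl_compl, compl_compl⟩ :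
          Finset (Fin n) ≃ Finset (Fin n))
      intro s
      rfl
    have hN2 : (∑ u : Finset (Fin n), if k = u.card then (1 - ∏ i ∈ u, sign i) else 0)
        = ∑ u ∈ Finset.powersetCard k (Finset.univ : Finset (Fin n)),
            (1 - ∏ i ∈ u, sign i) := by
      rw [← Finset.sum_filter]
      congr 1
      rw [Finset.powersetCard_eq_filter, Finset.powerset_univ]
      ext u
      simp [eq_comm]
    rw [hNcalc, hN2] at hcoeff
    have hNval : (∑ u ∈ Finset.powersetCard k (Finset.univ : Finset (Fin n)),
          ((1 : ℝ) - ∏ i ∈ u, sign i))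
        = ((n - 1).choose (k - 1) : ℝ) * (1 - (-1 : ℝ) ^ (k - 1))
          + ((n - 1).choose k : ℝ) * (1 - (-1 : ℝ) ^ k) := by
      have e0 : ∑ u ∈ Finset.powersetCard k (Finset.univ : Finset (Fin n)),
            ((1 : ℝ) - ∏ i ∈ u, sign i)
          = ∑ u ∈ Finset.powersetCard k (Finset.univ : Finset (Fin n)),
            ((1 : ℝ) - if last ∈ u then (-1 : ℝ) ^ (k - 1) else (-1) ^ k) :=
        Finset.sum_congr rfl (fun u hu => by rw [hprod u hu])
      rw [e0, ← Finset.sum_filter_add_sum_filter_not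
        (Finset.powersetCard k (Finset.univ : Finset (Fin n))) (fun u => last ∈ u)]
      have e1 : ∑ u ∈ (Finset.powersetCard k (Finset.univ : Finset (Fin n))).filter
            (fun u => last ∈ u), ((1 : ℝ) - if last ∈ u then (-1 : ℝ) ^ (k - 1) else (-1) ^ k)
          = ((n - 1).choose (k - 1) : ℝ) * (1 - (-1 : ℝ) ^ (k - 1)) := by
        rw [Finset.sum_congr rfl (fun u hu => by
          rw [if_pos (Finset.mem_filter.mp hu).2]), Finset.sum_const, hM, nsmul_eq_mul]
      have e2 : ∑ u ∈ (Finset.powersetCard k (Finset.univ : Finset (Fin n))).filter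
            (fun u => ¬ last ∈ u), ((1 : ℝ) - if last ∈ u then (-1 : ℝ) ^ (k - 1) else (-1) ^ k)
          = ((n - 1).choose k : ℝ) * (1 - (-1 : ℝ) ^ k) := by
        rw [Finset.sum_congr rfl (fun u hu => by
          rw [if_neg (Finset.mem_filter.mp hu).2]), Finset.sum_const, hMnot, nsmul_eq_mul]
      rw [e1, e2]
    have hNne : (∑ u ∈ Finset.powersetCard k (Finset.univ : Finset (Fin n)),
        ((1 : ℝ) - ∏ i ∈ u, sign i)) ≠ 0 := by
      rw [hNval]
      rcases Nat.even_or_odd k with hke | hko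
      · have h1 : (-1 : ℝ) ^ k = 1 := hke.neg_one_pow
        have h2 : (-1 : ℝ) ^ (k - 1) = -1 := (Nat.Even.sub_odd hk1 hke odd_one).neg_one_pow
        rw [h1, h2]
        have hpos : 0 < (n - 1).choose (k - 1) := Nat.choose_pos (by omega)
        have hpos' : (0 : ℝ) < ((n - 1).choose (k - 1) : ℝ) := by exact_mod_cast hpos
        nlinarith
      · have h1 : (-1 : ℝ) ^ k = -1 := hko.neg_one_pow
        have h2 : (-1 : ℝ) ^ (k - 1) = 1 := (Nat.Odd.sub_odd hko odd_one).neg_one_pow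
        rw [h1, h2]
        have hpos : 0 < (n - 1).choose k := Nat.choose_pos (by omega)
        have hpos' : (0 : ℝ) < ((n - 1).choose k : ℝ) := by exact_mod_cast hpos
        nlinarith
    exact (mul_eq_zero.mp hcoeff).resolve_left hNne
  exact (Module.forall_dual_apply_eq_zero_iff ℝ (c k)).mp hphi
end

section
/- Let E be a vector lattice over ℝ (a real vector space with a lattice order such that addition is order-covariant and multiplication by nonnegative scalars is order-preserving), let Y be a real vector space, let n ≥ 1, and let T : Eⁿ → Y be a symmetric n-linear map. Suppose that for all f, g ∈ E with f ≥ 0, g ≥ 0 and f ⊓ g = 0, one has T(f^{n-k} g^{k}) = 0 for every k with 1 ≤ k ≤ n−1. Then for all (not necessarily positive) f, g ∈ E with |f| ⊓ |g| = 0, one has T(f^{n-k} g^{k}) = 0 for every k with 1 ≤ k ≤ n−1. -/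
/-!
Write `T(u, v)` for `T` evaluated at `n - k` copies of `u` and `k` copies of `v`. By
multilinearity `N ↦ T(f⁺ + N • f⁻, v)` is a polynomial in `N`. When `v ≥ 0` and `|f| ⊓ v = 0`,
every `f⁺ + N • f⁻` is positive and disjoint from `v`, so the polynomial vanishes on `ℕ`, hence
identically, and its value at `N = -1` is `T(f, v) = 0`. The same argument in the second
variable, with `v = g⁺ + N • g⁻`, removes the sign condition on `g`.
-/

open Finset Polynomial

namespace MultilinearMap

variable {R ι M N : Type*} [Fintype ι]

theorem map_add_smul_eq_sum [DecidableEq ι] [CommSemiring R] [AddCommMonoid M] [Module R M]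
    [AddCommMonoid N] [Module R N] (T : MultilinearMap R (fun _ : ι => M) N)
    (x b : ι → M) (t : R) :
    T (x + t • b) = ∑ S : Finset ι, t ^ S.card • T (S.piecewise b x) := by
  rw [add_comm, map_add_univ]
  refine sum_congr rfl fun S _ => ?_
  have hscale : S.piecewise (t • b) x = fun i => (if i ∈ S then t else 1) • S.piecewise b x i := by
    funext i
    by_cases hi : i ∈ S <;> simp [hi]
  rw [hscale, map_smul_univ, prod_ite_mem, univ_inter, prod_const]

theorem exists_polynomial_eval_eq_map_add_smul [CommSemiring R] [AddCommMonoid M] [Module R M]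
    (T : MultilinearMap R (fun _ : ι => M) R) (x b : ι → M) :
    ∃ p : R[X], ∀ t, p.eval t = T (x + t • b) := by
  classical
  refine ⟨∑ S : Finset ι, C (T (S.piecewise b x)) * X ^ S.card, fun t => ?_⟩
  rw [map_add_smul_eq_sum, eval_finsetSum]
  exact sum_congr rfl fun S _ => by rw [eval_mul, eval_C, eval_pow, eval_X, smul_eq_mul, mul_comm]

theorem map_add_smul_eq_zero_of_infinite [Field R] [AddCommGroup M] [Module R M]
    [AddCommGroup N] [Module R N] (T : MultilinearMap R (fun _ : ι => M) N)
    (x b : ι → M) {S : Set R} (hS : S.Infinite) (h : ∀ s ∈ S, T (x + s • b) = 0) (t : R) :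
    T (x + t • b) = 0 := by
  rw [← Module.forall_dual_apply_eq_zero_iff R]
  intro φ
  obtain ⟨p, hp⟩ := (φ.compMultilinearMap T).exists_polynomial_eval_eq_map_add_smul x b
  have hp0 : p = 0 :=
    eq_zero_of_infinite_isRoot p (hS.mono fun s hs => by simp [IsRoot, hp, h s hs])
  simpa [hp0] using (hp t).symm

theorem map_sub_eq_zero_of_forall_nat [AddCommGroup M] [Module ℝ M]
    [AddCommGroup N] [Module ℝ N] (T : MultilinearMap ℝ (fun _ : ι => M) N) (x b : ι → M)
    (h : ∀ k : ℕ, T (x + (k : ℝ) • b) = 0) : T (x - b) = 0 := by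
  simpa [sub_eq_add_neg] using T.map_add_smul_eq_zero_of_infinite x b
    (Set.infinite_range_of_injective Nat.cast_injective) (by rintro _ ⟨k, rfl⟩; exact h k) (-1)

end MultilinearMap

section Disjoint

variable {E : Type*} [Lattice E] [AddCommGroup E] {a b c : E}

theorem inf_eq_zero_of_le (ha : a ⊓ c = 0) (hb : 0 ≤ b) (hba : b ≤ a) : b ⊓ c = 0 :=
  le_antisymm (ha ▸ inf_le_inf_right c hba) (le_inf hb (ha ▸ inf_le_right))

variable [AddLeftMono E]

theorem add_inf_eq_zero (ha : a ⊓ c = 0) (hb : b ⊓ c = 0) : (a + b) ⊓ c = 0 := by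
  have ha0 : 0 ≤ a := ha ▸ inf_le_left
  have hb0 : 0 ≤ b := hb ▸ inf_le_left
  have hc0 : 0 ≤ c := hb ▸ inf_le_right
  have hle_b : (a + b) ⊓ c ≤ b :=
    calc (a + b) ⊓ c ≤ (a + b) ⊓ (c + b) := inf_le_inf_left _ (le_add_of_nonneg_right hb0)
      _ = b := by rw [← inf_add, ha, zero_add]
  exact le_antisymm (hb ▸ le_inf hle_b inf_le_right) (le_inf (add_nonneg ha0 hb0) hc0)

theorem nsmul_inf_eq_zero (ha : a ⊓ c = 0) : ∀ k : ℕ, (k • a) ⊓ c = 0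
  | 0 => by rw [zero_nsmul]; exact inf_eq_left.2 (ha ▸ inf_le_right)
  | k + 1 => by rw [succ_nsmul]; exact add_inf_eq_zero (nsmul_inf_eq_zero ha k) ha

theorem posPart_add_nsmul_negPart_inf_eq_zero (h : |a| ⊓ c = 0) (k : ℕ) :
    (a⁺ + k • a⁻) ⊓ c = 0 :=
  add_inf_eq_zero (inf_eq_zero_of_le h (posPart_nonneg a) (sup_le (le_abs_self a) (abs_nonneg a)))
    (nsmul_inf_eq_zero
      (inf_eq_zero_of_le h (negPart_nonneg a) (sup_le (neg_le_abs a) (abs_nonneg a))) k)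

end Disjoint

section Blocks

variable {E Y : Type*} {n : ℕ}

def blocks (n m : ℕ) (u v : E) : Fin n → E := fun i => if (i : ℕ) < m then u else v

theorem blocks_add_smul [AddCommGroup E] [Module ℝ E] (m : ℕ) (u v u' v' : E) (c : ℝ) :
    blocks n m (u + c • u') (v + c • v') = blocks n m u v + c • blocks n m u' v' := by
  funext i
  by_cases hi : (i : ℕ) < m <;> simp [blocks, hi]

theorem blocks_sub [AddCommGroup E] (m : ℕ) (u v u' v' : E) :
    blocks n m (u - u') (v - v') = blocks n m u v - blocks n m u' v' := by
  funext i
  by_cases hi : (i : ℕ) < m <;> simp [blocks, hi]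

variable [Lattice E] [AddCommGroup E] [AddLeftMono E] [Module ℝ E] [AddCommGroup Y] [Module ℝ Y]
  (T : MultilinearMap ℝ (fun _ : Fin n => E) Y) (m : ℕ)

theorem map_blocks_eq_zero_of_left (u v : E) (h : ∀ k : ℕ, T (blocks n m (u⁺ + k • u⁻) v) = 0) :
    T (blocks n m u v) = 0 := by
  have hsplit := blocks_sub (n := n) m u⁺ v u⁻ 0
  rw [posPart_sub_negPart, sub_zero] at hsplit
  rw [hsplit]
  refine T.map_sub_eq_zero_of_forall_nat _ _ fun k => ?_
  convert h k using 2
  rw [← blocks_add_smul, smul_zero, add_zero, Nat.cast_smul_eq_nsmul]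

theorem map_blocks_eq_zero_of_right (u v : E) (h : ∀ k : ℕ, T (blocks n m u (v⁺ + k • v⁻)) = 0) :
    T (blocks n m u v) = 0 := by
  have hsplit := blocks_sub (n := n) m u v⁺ 0 v⁻
  rw [posPart_sub_negPart, sub_zero] at hsplit
  rw [hsplit]
  refine T.map_sub_eq_zero_of_forall_nat _ _ fun k => ?_
  convert h k using 2
  rw [← blocks_add_smul, smul_zero, add_zero, Nat.cast_smul_eq_nsmul]

end Blocks

theorem stmt_10_general (E Y : Type*) [Lattice E] [AddCommGroup E] [Module ℝ E]
    [CovariantClass E E (· + ·) (· ≤ ·)]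
    [AddCommGroup Y] [Module ℝ Y] (n : ℕ)
    (T : MultilinearMap ℝ (fun _ : Fin n => E) Y)
    (h : ∀ f g : E, 0 ≤ f → 0 ≤ g → f ⊓ g = 0 → ∀ k, 1 ≤ k → k ≤ n - 1 →
      T (fun i => if (i : ℕ) < n - k then f else g) = 0) :
    ∀ f g : E, |f| ⊓ |g| = 0 → ∀ k, 1 ≤ k → k ≤ n - 1 →
      T (fun i => if (i : ℕ) < n - k then f else g) = 0 := by
  intro f g hfg k hk1 hk2
  have hpos_left : ∀ v, |f| ⊓ v = 0 → T (blocks n (n - k) f v) = 0 := fun v hv =>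
    map_blocks_eq_zero_of_left T _ f v fun j =>
      have hdisj := posPart_add_nsmul_negPart_inf_eq_zero hv j
      h _ _ (hdisj ▸ inf_le_left) (hdisj ▸ inf_le_right) hdisj k hk1 hk2
  refine map_blocks_eq_zero_of_right T _ f g fun j => hpos_left _ ?_
  rw [inf_comm] at hfg ⊢
  exact posPart_add_nsmul_negPart_inf_eq_zero hfg j

theorem stmt_10 (E Y : Type*) [Lattice E] [AddCommGroup E] [Module ℝ E]
    [CovariantClass E E (· + ·) (· ≤ ·)] [PosSMulMono ℝ E]
    [AddCommGroup Y] [Module ℝ Y] (n : ℕ) (hn : 1 ≤ n)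
    (T : MultilinearMap ℝ (fun _ : Fin n => E) Y)
    (hsym : ∀ (σ : Equiv.Perm (Fin n)) (x : Fin n → E), T (x ∘ σ) = T x)
    (h : ∀ f g : E, 0 ≤ f → 0 ≤ g → f ⊓ g = 0 → ∀ k, 1 ≤ k → k ≤ n - 1 →
      T (fun i => if (i : ℕ) < n - k then f else g) = 0) :
    ∀ f g : E, |f| ⊓ |g| = 0 → ∀ k, 1 ≤ k → k ≤ n - 1 →
      T (fun i => if (i : ℕ) < n - k then f else g) = 0 :=
  stmt_10_general E Y n T h
end
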